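/- Let G be a simple graph on n vertices and p a natural number. Then the general second Zagreb index satisfies M_2^{(p)}(G) = ∑_{i=0}^{n−2} ∑_{k=i}^{n−2} i! · k! · S(p+1, i+1) · S(p+1, k+1) · S_{i,k}(G), where S(n,k) are Stirling numbers of the second kind and S_{i,k}(G) is the double star sequence. -/

import Mathlib

open Finset

variable {V : Type*} [Fintype V] [DecidableEq V]

/-- Sum over the edges of `G` of a symmetric function of the endpoint degrees. -/
def edgeSum (G : SimpleGraph V) [DecidableRel G.Adj] {R : Type*} [AddCommMonoid R] (f : ℕ → ℕ → R)
    (hf : ∀ x y, f x y = f y x) : R :=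
  ∑ e ∈ G.edgeFinset, Sym2.lift ⟨fun u v => f (G.degree u) (G.degree v),
    fun _ _ => hf _ _⟩ e

/-- The double star sequence `S_{a,b}(G)`. -/
def dstar (G : SimpleGraph V) [DecidableRel G.Adj] (a b : ℕ) : ℕ :=
  if a = b then
    edgeSum G (fun du dv => (du - 1).choose a * (dv - 1).choose a) (fun x y => by ring)
  else
    edgeSum G (fun du dv => (du - 1).choose a * (dv - 1).choose b
      + (du - 1).choose b * (dv - 1).choose a) (fun x y => by ring)

/-- `dfreq G i j` is the number of edges of `G` whose endpoint degrees are `i+1` and `j+1`. -/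
def dfreq (G : SimpleGraph V) [DecidableRel G.Adj] (i j : ℕ) : ℕ :=
  (G.edgeFinset.filter fun e =>
    Sym2.lift ⟨fun u v => ({G.degree u, G.degree v} : Multiset ℕ),
      fun _ _ => Multiset.cons_swap _ _ _⟩ e = ({i + 1, j + 1} : Multiset ℕ)).card

/-- The general second Zagreb index `M₂⁽ᵖ⁾(G)`. -/
def zagreb2 (G : SimpleGraph V) [DecidableRel G.Adj] (p : ℕ) : ℕ :=
  edgeSum G (fun du dv => (du * dv) ^ p) (fun x y => by ring)

/-- Stirling numbers of the second kind. -/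
def stirling2 : ℕ → ℕ → ℕ
  | 0, 0 => 1
  | 0, _ + 1 => 0
  | _ + 1, 0 => 0
  | n + 1, k + 1 => (k + 1) * stirling2 n (k + 1) + stirling2 n k

/-! For `d ≥ 1` one has `d ^ p = ∑ i, i! * S(p+1, i+1) * C(d-1, i)`: by induction on `p`, using the
Stirling recurrence and `d * C(d-1, i) = (i+1) * (C(d-1, i) + C(d-1, i+1))`. Multiplying these
expansions for the two endpoint degrees of an edge and folding the square of indices `(i, k)` onto
`i ≤ k` writes `(d_u d_v) ^ p` as the edge's contribution to `∑ i! k! S S S_{i,k}`; the range of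
indices suffices because every endpoint degree lies between `1` and `n - 1`. -/

open scoped Nat

theorem stirling2_eq_stirlingSecond : stirling2 = Nat.stirlingSecond := by
  funext n k
  induction n generalizing k with
  | zero => cases k <;> rfl
  | succ n ih =>
    cases k with
    | zero => rfl
    | succ k => rw [stirling2, Nat.stirlingSecond_succ_succ, ih, ih]

theorem succ_mul_choose_eq_add (m i : ℕ) :
    (m + 1) * m.choose i = (i + 1) * m.choose i + (i + 1) * m.choose (i + 1) := by
  rw [Nat.add_one_mul_choose_eq, Nat.choose_succ_succ]
  ring

theorem succ_pow_eq_sum_stirlingSecond {m N : ℕ} (hN : m < N) (p : ℕ) :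
    (m + 1) ^ p = ∑ i ∈ range N, i ! * Nat.stirlingSecond (p + 1) (i + 1) * m.choose i := by
  induction p with
  | zero =>
    rw [sum_eq_single_of_mem 0 (mem_range.mpr (by omega))]
    · simp [Nat.stirlingSecond_self]
    · intro i _ hi
      rw [Nat.stirlingSecond_eq_zero_of_lt (by omega), mul_zero, zero_mul]
  | succ p ih =>
    have shift : ∑ i ∈ range N, (i + 1)! * Nat.stirlingSecond (p + 1) (i + 1) * m.choose (i + 1)
        = ∑ i ∈ range N, i ! * Nat.stirlingSecond (p + 1) i * m.choose i := by
      simpa [Nat.choose_eq_zero_of_lt hN] using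
        (sum_range_succ' (fun i => i ! * Nat.stirlingSecond (p + 1) i * m.choose i) N).symm.trans
          (sum_range_succ _ N)
    calc (m + 1) ^ (p + 1)
        = ∑ i ∈ range N, i ! * Nat.stirlingSecond (p + 1) (i + 1) * ((m + 1) * m.choose i) := by
          rw [pow_succ', ih, mul_sum]
          exact sum_congr rfl fun i _ => by ring
      _ = ∑ i ∈ range N, (i + 1)! * Nat.stirlingSecond (p + 1) (i + 1) * m.choose i
          + ∑ i ∈ range N, (i + 1)! * Nat.stirlingSecond (p + 1) (i + 1) * m.choose (i + 1) := by
          rw [← sum_add_distrib]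
          refine sum_congr rfl fun i _ => ?_
          rw [succ_mul_choose_eq_add, Nat.factorial_succ]
          ring
      _ = _ := by
          rw [shift, ← sum_add_distrib]
          refine sum_congr rfl fun i _ => ?_
          rw [Nat.stirlingSecond_succ_succ (p + 1) i, Nat.factorial_succ]
          ring

theorem sum_range_sum_range_eq_sum_Ico {M : Type*} [AddCommMonoid M] (f : ℕ → ℕ → M) (N : ℕ) :
    ∑ i ∈ range N, ∑ k ∈ range N, f i k
      = ∑ i ∈ range N, ∑ k ∈ Ico i N, if i = k then f i i else f i k + f k i := by
  induction N with
  | zero => simp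
  | succ N ih =>
    have last_col : ∀ i ∈ range N, ∑ k ∈ Ico i (N + 1), (if i = k then f i i else f i k + f k i)
        = ∑ k ∈ Ico i N, (if i = k then f i i else f i k + f k i) + (f i N + f N i) := by
      intro i hi
      rw [mem_range] at hi
      rw [sum_Ico_succ_top hi.le, if_neg hi.ne]
    conv_rhs => rw [sum_range_succ, sum_congr rfl last_col, Nat.Ico_succ_singleton, sum_singleton,
      if_pos rfl]
    simp only [sum_range_succ, sum_add_distrib, ih]
    abel

def dstarTerm (a b x y : ℕ) : ℕ :=
  if a = b then (x - 1).choose a * (y - 1).choose a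
  else (x - 1).choose a * (y - 1).choose b + (x - 1).choose b * (y - 1).choose a

theorem dstarTerm_comm (a b x y : ℕ) : dstarTerm a b x y = dstarTerm a b y x := by
  unfold dstarTerm
  split_ifs <;> ring

theorem mul_pow_eq_sum_dstarTerm {x y N : ℕ} (hx : 1 ≤ x) (hxN : x ≤ N) (hy : 1 ≤ y)
    (hyN : y ≤ N) (p : ℕ) :
    (x * y) ^ p = ∑ i ∈ range N, ∑ k ∈ Ico i N, i ! * k ! * Nat.stirlingSecond (p + 1) (i + 1)
      * Nat.stirlingSecond (p + 1) (k + 1) * dstarTerm i k x y := by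
  obtain ⟨a, rfl⟩ := exists_add_of_le hx
  obtain ⟨b, rfl⟩ := exists_add_of_le hy
  rw [mul_pow, add_comm 1 a, add_comm 1 b, succ_pow_eq_sum_stirlingSecond (m := a) (N := N) (by omega),
    succ_pow_eq_sum_stirlingSecond (m := b) (N := N) (by omega), sum_mul_sum,
    sum_range_sum_range_eq_sum_Ico]
  refine sum_congr rfl fun i _ => sum_congr rfl fun k _ => ?_
  unfold dstarTerm
  split_ifs with h
  · subst h; simp only [Nat.add_sub_cancel]; ring
  · simp only [Nat.add_sub_cancel]; ring

section edgeSum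

omit [DecidableEq V]

variable (G : SimpleGraph V) [DecidableRel G.Adj] {R : Type*}

theorem edgeSum_congr [AddCommMonoid R] {f g : ℕ → ℕ → R} (hf : ∀ x y, f x y = f y x)
    (hg : ∀ x y, g x y = g y x)
    (h : ∀ u v, G.Adj u v → f (G.degree u) (G.degree v) = g (G.degree u) (G.degree v)) :
    edgeSum G f hf = edgeSum G g hg := by
  refine sum_congr rfl fun e he => ?_
  induction e using Sym2.ind with
  | _ u v => exact h u v (G.mem_edgeFinset.mp he)

theorem sum_edgeSum [AddCommMonoid R] {ι : Type*} (s : Finset ι) (f : ι → ℕ → ℕ → R)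
    (hf : ∀ i x y, f i x y = f i y x) :
    ∑ i ∈ s, edgeSum G (f i) (hf i)
      = edgeSum G (fun x y => ∑ i ∈ s, f i x y) (fun x y => sum_congr rfl fun i _ => hf i x y) := by
  unfold edgeSum
  rw [sum_comm]
  refine sum_congr rfl fun e _ => ?_
  induction e using Sym2.ind with
  | _ u v => rfl

theorem mul_edgeSum [NonUnitalNonAssocSemiring R] (c : R) (f : ℕ → ℕ → R)
    (hf : ∀ x y, f x y = f y x) :
    c * edgeSum G f hf = edgeSum G (fun x y => c * f x y) (fun x y => by rw [hf]) := by
  unfold edgeSum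
  rw [mul_sum]
  refine sum_congr rfl fun e _ => ?_
  induction e using Sym2.ind with
  | _ u v => rfl

theorem dstar_eq_edgeSum (a b : ℕ) :
    dstar G a b = edgeSum G (dstarTerm a b) (dstarTerm_comm a b) := by
  unfold dstar dstarTerm
  split_ifs with h <;> simp only [h]

end edgeSum

theorem zagreb2_eq_sum_dstar (G : SimpleGraph V) [DecidableRel G.Adj]
    (n : ℕ) (hn : n = Fintype.card V) (p : ℕ) :
    zagreb2 G p = ∑ i ∈ Finset.range (n - 1), ∑ k ∈ Finset.Icc i (n - 2),
      i.factorial * k.factorial * stirling2 (p + 1) (i + 1) * stirling2 (p + 1) (k + 1) *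
        dstar G i k := by
  have Icc_eq_Ico : ∀ i ∈ range (n - 1), Icc i (n - 2) = Ico i (n - 1) := fun i hi => by
    ext k; simp only [mem_range, mem_Icc, mem_Ico] at hi ⊢; omega
  rw [sum_congr rfl fun i hi => by rw [Icc_eq_Ico i hi], stirling2_eq_stirlingSecond]
  simp only [dstar_eq_edgeSum, mul_edgeSum, sum_edgeSum]
  refine edgeSum_congr G _ _ fun u v huv => mul_pow_eq_sum_dstarTerm ?_ ?_ ?_ ?_ p
  · exact G.degree_pos_iff_exists_adj u |>.mpr ⟨v, huv⟩
  · have := G.degree_lt_card_verts u; omega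
  · exact G.degree_pos_iff_exists_adj v |>.mpr ⟨u, huv.symm⟩
  · have := G.degree_lt_card_verts v; omega
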